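/- arXiv:1107.4570 — 4 statements merged into one kernel-verified Lean document; each statement's English description precedes it below -/
import Mathlib

section
/- For any Σ-repair B of D (Σ ∈ {loosely-sound, loosely-exact}) whose keys use only values from a finite set V, there exists a database B' homomorphic to B with B' ⊆ D*, where D* is the canonical database over V augmented with fresh distinct null values, one fresh null per non-key position-combination. -/
/-!
Send each fact of `B` to its canonical representative in `D*`. The representative keeps every
`V`-value, in particular the key, so two facts of `B` with the same representative share relation
and key and hence coincide: the map is injective. Its image lies in `D*`, where every fresh null
already occurs only once.
-/

namespace CQACanonical

variable {R Γ : Type*}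

/-- The key values of a fact `f = (r, vs)`: the values at the key positions
of its relation name. -/
def keyVals (keyIdx : R → List ℕ) (d : Γ) (f : R × List Γ) : List Γ :=
  (keyIdx f.1).map (fun i => f.2.getD i d)

/-- `B'` is a value-renaming variant of `B` over the active domain `V`
(`B' ∈ H(B)`): there is a bijection of `B` onto `B'` preserving relation
names, arities, and values from `V`, replacing values outside `V` with values
outside `V`, such that no value outside `V` occurs twice in `B'`. -/
def HomVariant (keyIdx : R → List ℕ) (d : Γ) (V : Set Γ)
    (B B' : Set (R × List Γ)) : Prop :=
  ∃ φ : R × List Γ → R × List Γ, Set.BijOn φ B B' ∧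
    (∀ f ∈ B, (φ f).1 = f.1 ∧ (φ f).2.length = f.2.length ∧
      ∀ i < f.2.length,
        (f.2.getD i d ∈ V → (φ f).2.getD i d = f.2.getD i d) ∧
        (f.2.getD i d ∉ V → (φ f).2.getD i d ∉ V)) ∧
    (∀ f ∈ B', ∀ g ∈ B', ∀ i < f.2.length, ∀ j < g.2.length,
      f.2.getD i d ∉ V → (f ≠ g ∨ i ≠ j) → f.2.getD i d ≠ g.2.getD j d)

def RenamesFact (d : Γ) (V : Set Γ) (f f' : R × List Γ) : Prop :=
  f'.1 = f.1 ∧ f'.2.length = f.2.length ∧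
    ∀ i < f.2.length,
      (f.2.getD i d ∈ V → f'.2.getD i d = f.2.getD i d) ∧
      (f.2.getD i d ∉ V → f'.2.getD i d ∉ V)

def NullsOccurOnce (d : Γ) (V : Set Γ) (S : Set (R × List Γ)) : Prop :=
  ∀ f ∈ S, ∀ g ∈ S, ∀ i < f.2.length, ∀ j < g.2.length,
    f.2.getD i d ∉ V → (f ≠ g ∨ i ≠ j) → f.2.getD i d ≠ g.2.getD j d

theorem NullsOccurOnce.mono {d : Γ} {V : Set Γ} {S T : Set (R × List Γ)}
    (hT : NullsOccurOnce d V T) (hST : S ⊆ T) : NullsOccurOnce d V S :=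
  fun f hf g hg => hT f (hST hf) g (hST hg)

theorem RenamesFact.keyVals_eq {keyIdx : R → List ℕ} {d : Γ} {V : Set Γ}
    {f f' : R × List Γ} (h : RenamesFact d V f f')
    (hrange : ∀ i ∈ keyIdx f.1, i < f.2.length) (hkeyV : ∀ i ∈ keyIdx f.1, f.2.getD i d ∈ V) :
    keyVals keyIdx d f' = keyVals keyIdx d f := by
  obtain ⟨hrel, -, hvals⟩ := h
  unfold keyVals
  rw [hrel]
  exact List.map_congr_left fun i hi => (hvals i (hrange i hi)).1 (hkeyV i hi)

theorem injOn_of_renamesFact {keyIdx : R → List ℕ} {d : Γ} {V : Set Γ}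
    {B : Set (R × List Γ)} {φ : R × List Γ → R × List Γ}
    (hrange : ∀ f ∈ B, ∀ i ∈ keyIdx f.1, i < f.2.length)
    (hkeyV : ∀ f ∈ B, ∀ i ∈ keyIdx f.1, f.2.getD i d ∈ V)
    (hkd : ∀ f ∈ B, ∀ g ∈ B, f.1 = g.1 → keyVals keyIdx d f = keyVals keyIdx d g → f = g)
    (hren : ∀ f ∈ B, RenamesFact d V f (φ f)) : Set.InjOn φ B := by
  intro f hf g hg hfg
  apply hkd f hf g hg
  · rw [← (hren f hf).1, ← (hren g hg).1, hfg]
  · rw [← (hren f hf).keyVals_eq (hrange f hf) (hkeyV f hf),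
      ← (hren g hg).keyVals_eq (hrange g hg) (hkeyV g hg), hfg]

theorem homVariant_image {keyIdx : R → List ℕ} {d : Γ} {V : Set Γ}
    {B : Set (R × List Γ)} {φ : R × List Γ → R × List Γ} (hinj : Set.InjOn φ B)
    (hren : ∀ f ∈ B, RenamesFact d V f (φ f)) (hnulls : NullsOccurOnce d V (φ '' B)) :
    HomVariant keyIdx d V B (φ '' B) :=
  ⟨φ, hinj.bijOn_image, hren, hnulls⟩

theorem exists_hom_variant_in_canonical_general (keyIdx : R → List ℕ) (d : Γ)
    (V : Set Γ) (B Dstar : Set (R × List Γ))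
    -- keys of facts of `B` are in range and use only values from `V`
    (hkeyRange : ∀ f ∈ B, ∀ i ∈ keyIdx f.1, i < f.2.length)
    (hkeyV : ∀ f ∈ B, ∀ i ∈ keyIdx f.1, f.2.getD i d ∈ V)
    -- no two facts of `B` share relation name and key
    (hkd : ∀ f ∈ B, ∀ g ∈ B,
      f.1 = g.1 → keyVals keyIdx d f = keyVals keyIdx d g → f = g)
    -- fresh nulls occur at most once in `Dstar`
    (hDstarFresh : ∀ f ∈ Dstar, ∀ g ∈ Dstar, ∀ i < f.2.length, ∀ j < g.2.length,
      f.2.getD i d ∉ V → (f ≠ g ∨ i ≠ j) → f.2.getD i d ≠ g.2.getD j d)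
    -- `Dstar` is complete: every fact with key values in `V` has a canonical
    -- representative in `Dstar` agreeing on its `V`-valued positions and
    -- having fresh nulls elsewhere
    (hDstarComplete : ∀ f : R × List Γ, (∀ i ∈ keyIdx f.1, i < f.2.length) →
      (∀ i ∈ keyIdx f.1, f.2.getD i d ∈ V) →
      ∃ f' ∈ Dstar, f'.1 = f.1 ∧ f'.2.length = f.2.length ∧
        ∀ i < f.2.length,
          (f.2.getD i d ∈ V → f'.2.getD i d = f.2.getD i d) ∧
          (f.2.getD i d ∉ V → f'.2.getD i d ∉ V)) :
    ∃ B' : Set (R × List Γ), HomVariant keyIdx d V B B' ∧ B' ⊆ Dstar := by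
  have hrep : ∀ f ∈ B, ∃ f' ∈ Dstar, RenamesFact d V f f' :=
    fun f hf => hDstarComplete f (hkeyRange f hf) (hkeyV f hf)
  choose! φ hφDstar hφren using hrep
  have himage : φ '' B ⊆ Dstar := Set.image_subset_iff.2 hφDstar
  exact ⟨φ '' B, homVariant_image (injOn_of_renamesFact hkeyRange hkeyV hkd hφren) hφren
    (NullsOccurOnce.mono hDstarFresh himage), himage⟩

/-- Every repair `B` whose keys use only values from the finite active domain
`V` (and with no two facts sharing relation and key) has a value-renaming
variant `B' ∈ H(B)` contained in the canonical database `Dstar`, which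
contains, for each relation name, each assignment of `V`-values to key
positions, and each pattern of `V`-values/fresh nulls for the remaining
positions, exactly one fact, all fresh nulls being pairwise distinct. -/
theorem exists_hom_variant_in_canonical (keyIdx : R → List ℕ) (d : Γ)
    (V : Set Γ) (hV : V.Finite) (B Dstar : Set (R × List Γ))
    -- keys of facts of `B` are in range and use only values from `V`
    (hkeyRange : ∀ f ∈ B, ∀ i ∈ keyIdx f.1, i < f.2.length)
    (hkeyV : ∀ f ∈ B, ∀ i ∈ keyIdx f.1, f.2.getD i d ∈ V)
    -- no two facts of `B` share relation name and key
    (hkd : ∀ f ∈ B, ∀ g ∈ B,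
      f.1 = g.1 → keyVals keyIdx d f = keyVals keyIdx d g → f = g)
    -- fresh nulls occur at most once in `Dstar`
    (hDstarFresh : ∀ f ∈ Dstar, ∀ g ∈ Dstar, ∀ i < f.2.length, ∀ j < g.2.length,
      f.2.getD i d ∉ V → (f ≠ g ∨ i ≠ j) → f.2.getD i d ≠ g.2.getD j d)
    -- `Dstar` is complete: every fact with key values in `V` has a canonical
    -- representative in `Dstar` agreeing on its `V`-valued positions and
    -- having fresh nulls elsewhere
    (hDstarComplete : ∀ f : R × List Γ, (∀ i ∈ keyIdx f.1, i < f.2.length) →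
      (∀ i ∈ keyIdx f.1, f.2.getD i d ∈ V) →
      ∃ f' ∈ Dstar, f'.1 = f.1 ∧ f'.2.length = f.2.length ∧
        ∀ i < f.2.length,
          (f.2.getD i d ∈ V → f'.2.getD i d = f.2.getD i d) ∧
          (f.2.getD i d ∉ V → f'.2.getD i d ∉ V)) :
    ∃ B' : Set (R × List Γ), HomVariant keyIdx d V B B' ∧ B' ⊆ Dstar :=
  exists_hom_variant_in_canonical_general keyIdx d V B Dstar hkeyRange hkeyV hkd hDstarFresh
    hDstarComplete

end CQACanonical
end

section
/- When the schema contains denial constraints only (no inclusion dependencies), every loosely-exact repair B of D satisfies B ⊆ D, and hence B is a CM-complete repair of D. -/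
/-- A CM-complete repair of `D`: a consistent subset of `D` maximal among
consistent subsets of `D`. -/
def CMRepair {α : Type*} (C : Set α → Prop) (D B : Set α) : Prop :=
  C B ∧ B ⊆ D ∧ ∀ B', C B' → ¬ (B ⊂ B' ∧ B' ⊆ D)

/-- A loosely-exact repair of `D`: a consistent set whose symmetric difference
with `D` is minimal under strict inclusion. -/
def LERepair {α : Type*} (C : Set α → Prop) (D B : Set α) : Prop :=
  C B ∧ ∀ B', C B' → ¬ (symmDiff B' D ⊂ symmDiff B D)

/-! Under denial constraints, `B ∩ D` is consistent whenever `B` is, and its symmetric difference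
`D \ B` with `D` is strictly smaller than that of `B` unless `B ⊆ D`. Once `B ⊆ D`, the symmetric
difference is `D \ B`, so any consistent `B'` with `B ⊂ B' ⊆ D` would again strictly shrink it. -/

namespace Set

variable {α : Type*} {s s' t : Set α}

theorem symmDiff_inter_ssubset_symmDiff (h : ¬ s ⊆ t) :
    symmDiff (s ∩ t) t ⊂ symmDiff s t := by
  obtain ⟨x, hxs, hxt⟩ := not_subset.mp h
  rw [ssubset_iff_of_subset fun y hy => by simp only [mem_symmDiff, mem_inter_iff] at hy ⊢; tauto]
  exact ⟨x, by simp [mem_symmDiff, hxs, hxt], by simp [mem_symmDiff, hxt]⟩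

theorem symmDiff_ssubset_symmDiff_of_ssubset (hs : s ⊂ s') (hs' : s' ⊆ t) :
    symmDiff s' t ⊂ symmDiff s t := by
  rw [symmDiff_of_le hs', symmDiff_of_le (hs.subset.trans hs')]
  obtain ⟨x, hxs', hxs⟩ := exists_of_ssubset hs
  rw [ssubset_iff_of_subset (sdiff_subset_sdiff_right hs.subset)]
  exact ⟨x, ⟨hs' hxs', hxs⟩, fun hx => hx.2 hxs'⟩

end Set

namespace LERepair

variable {α : Type*} {C : Set α → Prop} {D B : Set α}

theorem subset (hdown : ∀ S S' : Set α, C S → S' ⊆ S → C S') (hB : LERepair C D B) :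
    B ⊆ D := by
  by_contra hBD
  exact hB.2 (B ∩ D) (hdown B _ hB.1 Set.inter_subset_left)
    (Set.symmDiff_inter_ssubset_symmDiff hBD)

theorem cmRepair (hB : LERepair C D B) (hBD : B ⊆ D) : CMRepair C D B :=
  ⟨hB.1, hBD, fun B' hB' ⟨hBB', hB'D⟩ =>
    hB.2 B' hB' (Set.symmDiff_ssubset_symmDiff_of_ssubset hBB' hB'D)⟩

end LERepair

/-- With denial constraints only (consistency downward closed), every
loosely-exact repair of `D` is a subset of `D` and is a CM-complete repair. -/
theorem le_repair_is_cm_under_dc_only {α : Type*} (C : Set α → Prop)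
    (hdown : ∀ S S' : Set α, C S → S' ⊆ S → C S')
    (D B : Set α) (hB : LERepair C D B) :
    B ⊆ D ∧ CMRepair C D B := by
  have hBD := hB.subset hdown
  exact ⟨hBD, hB.cmRepair hBD⟩
end

section
/- Under inclusion-dependencies-only consistency (union-closed), for every loosely-exact repair B of D, the unique CM-complete repair B₀ satisfies B₀ ⊆ B ∩ D (equivalently B₀ = B ∩ D when B ∩ D is consistent). -/
namespace Set

variable {α : Type*}

theorem symmDiff_union_ssubset {B T D : Set α} (hTD : T ⊆ D) (hTB : ¬ T ⊆ B) :
    symmDiff (B ∪ T) D ⊂ symmDiff B D := by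
  obtain ⟨x, hxT, hxB⟩ := not_subset.mp hTB
  refine ssubset_of_subset_not_subset (fun y hy => ?_) fun h => ?_
  · simp only [mem_symmDiff, mem_union] at hy ⊢
    have := @hTD y
    tauto
  · have hx : x ∈ symmDiff B D := mem_symmDiff.mpr (Or.inr ⟨hTD hxT, hxB⟩)
    simpa [mem_symmDiff, hxT, hTD hxT] using h hx

end Set

theorem union_of_sUnion_closed {α : Type*} {C : Set α → Prop}
    (hunion : ∀ 𝒮 : Set (Set α), (∀ S ∈ 𝒮, C S) → C (⋃₀ 𝒮)) {S T : Set α}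
    (hS : C S) (hT : C T) : C (S ∪ T) :=
  Set.sUnion_pair S T ▸ hunion {S, T} (by rintro _ (rfl | rfl); exacts [hS, hT])

theorem LERepair.subset_of_consistent_union {α : Type*} {C : Set α → Prop} {D B T : Set α}
    (hB : LERepair C D B) (hTD : T ⊆ D) (hC : C (B ∪ T)) : T ⊆ B :=
  by_contra fun hTB => hB.2 _ hC (Set.symmDiff_union_ssubset hTD hTB)

theorem cm_repair_subset_le_repair_under_ind_only_general {α : Type*}
    (C : Set α → Prop)
    (hunion : ∀ 𝒮 : Set (Set α), (∀ S ∈ 𝒮, C S) → C (⋃₀ 𝒮))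
    (D B : Set α) (hB : LERepair C D B) :
    ⋃₀ {S | S ⊆ D ∧ C S} ⊆ B ∩ D := by
  have hB₀D : ⋃₀ {S | S ⊆ D ∧ C S} ⊆ D := Set.sUnion_subset fun _ hS => hS.1
  have hB₀ : C (⋃₀ {S | S ⊆ D ∧ C S}) := hunion _ fun _ hS => hS.2
  exact Set.subset_inter
    (hB.subset_of_consistent_union hB₀D (union_of_sUnion_closed hunion hB.1 hB₀)) hB₀D

/-- With inclusion dependencies only (consistency closed under unions and
holding for `∅`), the unique CM-complete repair `B₀` (the union of all
consistent subsets of `D`) is contained in `B ∩ D` for every loosely-exact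
repair `B` of `D`. -/
theorem cm_repair_subset_le_repair_under_ind_only {α : Type*}
    (C : Set α → Prop) (hempty : C ∅)
    (hunion : ∀ 𝒮 : Set (Set α), (∀ S ∈ 𝒮, C S) → C (⋃₀ 𝒮))
    (D B : Set α) (hB : LERepair C D B) :
    ⋃₀ {S | S ⊆ D ∧ C S} ⊆ B ∩ D :=
  cm_repair_subset_le_repair_under_ind_only_general C hunion D B hB
end

section
/- Counterexample for SFSK + KD: there exists a schema with only key dependencies and safe foreign superkeys, a database D, and a loosely-exact repair B of D such that no CM-complete repair of D is contained in B ∩ D. Concretely: with facts r(a,b), s(a,c), constraints key(r)={1,2}, key(s)={1}, and IND r(X,Y)→s(X,Y), the database D={r(a,b), s(a,c)} has loosely-exact repairs B₁={s(a,c)} and B₂={r(a,b), s(a,b)}, B₂ ∩ D = {r(a,b)} is inconsistent, and the only consistent subset of {r(a,b)} is ∅, which is not a CM-complete repair. -/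
namespace SFSKCounterexample

/-- Facts over two binary relations: `true` stands for `r`, `false` for `s`;
values `0, 1, 2` stand for `a, b, c`. -/
abbrev Fact := Bool × Fin 3 × Fin 3

/-- The fact `r(a,b)`. -/
def rab : Fact := (true, 0, 1)
/-- The fact `s(a,c)`. -/
def sac : Fact := (false, 0, 2)
/-- The fact `s(a,b)`. -/
def sab : Fact := (false, 0, 1)

/-- Consistency: the key dependency `key(s) = {1}` (no two `s`-facts with the
same first argument and distinct second arguments) and the safe foreign
superkey `r(X,Y) → s(X,Y)`. -/
def Cons (S : Set Fact) : Prop :=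
  (∀ x y z : Fin 3, (false, x, y) ∈ S → (false, x, z) ∈ S → y = z) ∧
  (∀ x y : Fin 3, (true, x, y) ∈ S → (false, x, y) ∈ S)

/-- A CM-complete repair. -/
def CMRepair (D B : Set Fact) : Prop :=
  Cons B ∧ B ⊆ D ∧ ∀ B', Cons B' → ¬ (B ⊂ B' ∧ B' ⊆ D)

/-- A loosely-exact repair. -/
def LERepair (D B : Set Fact) : Prop :=
  Cons B ∧ ∀ B', Cons B' → ¬ (symmDiff B' D ⊂ symmDiff B D)

/-- The database `D = {r(a,b), s(a,c)}`. -/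
def D : Set Fact := {rab, sac}
/-- The repair `B₁ = {s(a,c)}`. -/
def B₁ : Set Fact := {sac}
/-- The repair `B₂ = {r(a,b), s(a,b)}`. -/
def B₂ : Set Fact := {rab, sab}

/-! Since `r(a,b)` requires `s(a,b) ∉ D`, the only consistent subsets of `D` are `∅` and `B₁`,
so `B₁` is the unique CM-complete repair. `B₂` instead keeps `r(a,b)` by inserting `s(a,b)`
and deleting `s(a,c)`; it shares with `D` only the inconsistent `{r(a,b)}`. -/

lemma sab_notMem_D : sab ∉ D := by
  simp [D, rab, sac, sab]

lemma B₁_subset_D : B₁ ⊆ D := by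
  simp [B₁, D]

lemma cons_B₁ : Cons B₁ := by
  simp +contextual [Cons, B₁, sac]

lemma cons_B₂ : Cons B₂ := by
  simp +contextual [Cons, B₂, rab, sab]

lemma Cons.rab_notMem {S T : Set Fact} (hS : Cons S) (hST : S ⊆ T) (hT : sab ∉ T) : rab ∉ S :=
  fun h ↦ hT (hST (hS.2 0 1 h))

lemma not_cons_D : ¬ Cons D :=
  fun h ↦ h.rab_notMem subset_rfl sab_notMem_D (Set.mem_insert _ _)

lemma Cons.subset_B₁ {S : Set Fact} (hS : Cons S) (hSD : S ⊆ D) : S ⊆ B₁ := by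
  intro f hf
  rcases hSD hf with rfl | rfl
  · exact absurd hf (hS.rab_notMem hSD sab_notMem_D)
  · rfl

lemma cmRepair_B₁ : CMRepair D B₁ :=
  ⟨cons_B₁, B₁_subset_D, fun _ hB' ⟨hlt, hB'D⟩ ↦ hlt.2 (hB'.subset_B₁ hB'D)⟩

lemma eq_B₁_of_cmRepair {B : Set Fact} (hB : CMRepair D B) : B = B₁ := by
  obtain ⟨hcons, hBD, hmax⟩ := hB
  have hBB₁ := hcons.subset_B₁ hBD
  refine hBB₁.antisymm (by_contra fun hB₁B ↦ hmax B₁ cons_B₁ ⟨?_, B₁_subset_D⟩)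
  exact hBB₁.ssubset_of_not_subset hB₁B

lemma mem_of_mem_of_notMem_symmDiff {α : Type*} {s t : Set α} {a : α} (ht : a ∈ t)
    (h : a ∉ symmDiff s t) : a ∈ s :=
  by_contra fun hs ↦ h (Set.mem_symmDiff.2 (Or.inr ⟨ht, hs⟩))

lemma symmDiff_B₁_D : symmDiff B₁ D = {rab} := by
  ext f
  simp only [Set.mem_symmDiff, B₁, D, Set.mem_insert_iff, Set.mem_singleton_iff]
  revert f
  decide

lemma symmDiff_B₂_D : symmDiff B₂ D = {sab, sac} := by
  ext f
  simp only [Set.mem_symmDiff, B₂, D, Set.mem_insert_iff, Set.mem_singleton_iff]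
  revert f
  decide

/-- The only smaller symmetric difference is `∅`, i.e. `D` itself, which is inconsistent. -/
lemma leRepair_B₁ : LERepair D B₁ := by
  refine ⟨cons_B₁, fun B' hB' hlt ↦ not_cons_D ?_⟩
  rw [symmDiff_B₁_D, Set.ssubset_singleton_iff, Set.bot_eq_empty.symm, symmDiff_eq_bot] at hlt
  exact hlt ▸ hB'

/-- A smaller symmetric difference keeps `r(a,b)`, hence adds `s(a,b)`, hence keeps `s(a,c)`,
which clashes with `s(a,b)` on the key of `s`. -/
lemma leRepair_B₂ : LERepair D B₂ := by
  refine ⟨cons_B₂, fun B' hB' hlt ↦ ?_⟩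
  rw [symmDiff_B₂_D] at hlt
  have hrab : rab ∈ B' := mem_of_mem_of_notMem_symmDiff (Set.mem_insert _ _) fun h ↦ by
    rcases hlt.1 h with h | h <;> exact absurd h (by decide)
  have hsab : sab ∈ B' := hB'.2 0 1 hrab
  have hsab' : sab ∈ symmDiff B' D := Set.mem_symmDiff.2 (Or.inl ⟨hsab, sab_notMem_D⟩)
  have hsac : sac ∈ B' := mem_of_mem_of_notMem_symmDiff (Set.mem_insert_of_mem _ rfl) fun h ↦
    hlt.2 (Set.insert_subset hsab' (Set.singleton_subset_iff.2 h))
  exact absurd (hB'.1 0 1 2 hsab hsac) (by decide)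

lemma inter_B₂_D : B₂ ∩ D = {rab} := by
  ext f
  simp only [Set.mem_inter_iff, B₂, D, Set.mem_insert_iff, Set.mem_singleton_iff]
  revert f
  decide

lemma Cons.eq_empty_of_subset_rab {S : Set Fact} (hS : Cons S) (hSr : S ⊆ {rab}) : S = ∅ :=
  (Set.subset_singleton_iff_eq.1 hSr).resolve_right fun h ↦
    hS.rab_notMem hSr (by decide) (h ▸ rfl)

/-- Counterexample for KDs + SFSKs: `B₁` and `B₂` are loosely-exact repairs of
`D`, `B₁` is the unique CM-complete repair, `B₂ ∩ D = {r(a,b)}` is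
inconsistent, its only consistent subset is `∅`, which is not a CM-complete
repair, and hence no CM-complete repair of `D` is contained in `B₂ ∩ D`. -/
theorem sfsk_counterexample :
    LERepair D B₁ ∧ LERepair D B₂ ∧
    CMRepair D B₁ ∧ (∀ B, CMRepair D B → B = B₁) ∧
    B₂ ∩ D = {rab} ∧ ¬ Cons (B₂ ∩ D) ∧
    (∀ S : Set Fact, S ⊆ B₂ ∩ D → Cons S → S = ∅) ∧
    ¬ CMRepair D ∅ ∧
    (∀ B, CMRepair D B → ¬ B ⊆ B₂ ∩ D) := by
  refine ⟨leRepair_B₁, leRepair_B₂, cmRepair_B₁, fun _ ↦ eq_B₁_of_cmRepair, inter_B₂_D,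
    ?_, ?_, ?_, ?_⟩
  · rw [inter_B₂_D]
    exact fun h ↦ Set.singleton_ne_empty rab (h.eq_empty_of_subset_rab subset_rfl)
  · exact fun S hS hcons ↦ hcons.eq_empty_of_subset_rab (inter_B₂_D ▸ hS)
  · exact fun h ↦ (Set.singleton_nonempty sac).ne_empty (eq_B₁_of_cmRepair h).symm
  · intro B hB hsub
    rw [eq_B₁_of_cmRepair hB, inter_B₂_D, B₁, Set.singleton_subset_singleton] at hsub
    exact absurd hsub (by decide)

end SFSKCounterexample
end
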